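/- Let Σ ⊂ ℝⁿ be a compact smooth embedded k-dimensional submanifold without boundary with k ≥ 1. Then there exist constants ε₀ > 0 and c₀ > 0 such that for all points p, q ∈ Σ with 0 < |p − q| < ε₀, one has |π_p((p−q)/|p−q|)|² + |π_q((q−p)/|q−p|)|² ≥ c₀. -/

import Mathlib

open scoped RealInnerProductSpace ENNReal
open Set Filter

noncomputable section

/-- Euclidean `n`-space. -/
abbrev Euc (n : ℕ) := EuclideanSpace ℝ (Fin n)

/-- The orthogonal projection `π_K` onto a submodule `K`, as a map `Euc n → Euc n`. -/
def projSM {n : ℕ} (K : Submodule ℝ (Euc n)) (v : Euc n) : Euc n :=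
  (Submodule.orthogonalProjection K v : Euc n)

/-- `S` is a smooth embedded `k`-dimensional submanifold (without boundary) of `ℝⁿ`,
whose tangent space at each `x ∈ S` is the `k`-dimensional subspace `T x ⊆ ℝⁿ`:
every point of `S` has a neighbourhood in `S` which is the image of a smooth injective
parametrization, which is a homeomorphism onto its image, with injective differential whose
range is the assigned tangent space. -/
def IsSubmanifold (n k : ℕ) (S : Set (Euc n)) (T : Euc n → Submodule ℝ (Euc n)) : Prop :=
  ∀ x ∈ S, ∃ (f : Euc k → Euc n) (u : Set (Euc k)) (v : Set (Euc n)),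
    IsOpen u ∧ IsOpen v ∧ x ∈ v ∧ ContDiffOn ℝ (⊤ : ℕ∞) f u ∧ Set.InjOn f u ∧
    f '' u = S ∩ v ∧
    (∀ s ⊆ u, IsOpen s → ∃ w : Set (Euc n), IsOpen w ∧ f '' s = S ∩ w) ∧
    ∀ y ∈ u, Function.Injective (fderiv ℝ f y) ∧
      LinearMap.range ((fderiv ℝ f y) : Euc k →ₗ[ℝ] Euc n) = T (f y)

/-- The tangential part `η^T(x) = π_{T x}((x - y)/|x - y|)` of the outward unit conormal at `x`
of the chord from `x` to `y`. -/
def conormalT {n : ℕ} (T : Euc n → Submodule ℝ (Euc n)) (x y : Euc n) : Euc n :=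
  projSM (T x) (‖x - y‖⁻¹ • (x - y))

/-- A chord shortening flow relative to `S` (with tangent spaces `T`) on the time domain `dom`:
a pair of C¹ curves `p q : dom → S` with `p t ≠ q t`, satisfying
`p' = -π_{p}((p-q)/|p-q|)` and `q' = -π_{q}((q-p)/|q-p|)`. -/
def IsCSFOn {n : ℕ} (S : Set (Euc n)) (T : Euc n → Submodule ℝ (Euc n))
    (dom : Set ℝ) (p q : ℝ → Euc n) : Prop :=
  ∀ t ∈ dom, p t ∈ S ∧ q t ∈ S ∧ p t ≠ q t ∧
    HasDerivWithinAt p (-(conormalT T (p t) (q t))) dom t ∧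
    HasDerivWithinAt q (-(conormalT T (q t) (p t))) dom t

/-- The time interval `[0, Tm)` (where possibly `Tm = ∞`). -/
def csfDomain (Tm : ℝ≥0∞) : Set ℝ := {t : ℝ | 0 ≤ t ∧ ENNReal.ofReal t < Tm}

/-- A maximal chord shortening flow: one defined on `[0, Tm)` which cannot be extended to a
chord shortening flow on a strictly larger interval `[0, Tm')`. -/
def IsMaximalCSF {n : ℕ} (S : Set (Euc n)) (T : Euc n → Submodule ℝ (Euc n))
    (Tm : ℝ≥0∞) (p q : ℝ → Euc n) : Prop :=
  IsCSFOn S T (csfDomain Tm) p q ∧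
  ∀ Tm' : ℝ≥0∞, Tm < Tm' → ∀ p' q' : ℝ → Euc n,
    IsCSFOn S T (csfDomain Tm') p' q' →
    ¬ (∀ t ∈ csfDomain Tm, p' t = p t ∧ q' t = q t)

/-! In a chart `f` around a point of `Σ`, a short chord `f a - f b` differs from the tangent
vector `Df(a)(a - b) ∈ T_{f a}Σ` by at most a quarter of its length: strict differentiability at
the centre of the chart compares the chord with `Df(y₀)(a - b)`, continuity of `Df` moves the base
point to `a`, and injectivity of `Df(y₀)` bounds `‖a - b‖` by `‖f a - f b‖`. Hence the unit chord
has tangential part of norm at least `3/4` at its first endpoint alone. A Lebesgue number of the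
cover of the compact `Σ` by these chart neighbourhoods makes the estimate uniform. -/

open Topology

theorem ContDiffAt.eventually_norm_image_sub_sub_fderiv_le {E F : Type*} [NormedAddCommGroup E]
    [NormedSpace ℝ E] [FiniteDimensional ℝ E] [NormedAddCommGroup F] [NormedSpace ℝ F] {f : E → F}
    {y₀ : E} (hf : ContDiffAt ℝ 1 f y₀) (hinj : Function.Injective (fderiv ℝ f y₀)) {δ : ℝ}
    (hδ : 0 < δ) :
    ∀ᶠ p in 𝓝 y₀ ×ˢ 𝓝 y₀,
      ‖f p.1 - f p.2 - fderiv ℝ f p.1 (p.1 - p.2)‖ ≤ δ * ‖f p.1 - f p.2‖ := by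
  set D := fderiv ℝ f y₀
  obtain ⟨K, -, hK⟩ := (D : E →ₗ[ℝ] F).exists_antilipschitzWith (LinearMap.ker_eq_bot.2 hinj)
  -- `c K ≤ 1/4` turns `hsub` below into `‖a - b‖ ≤ 2 K ‖f a - f b‖`; then `4 c K ≤ δ` suffices
  set c : ℝ := min δ 1 / (4 * (K + 1))
  have hc : 0 < c := by positivity
  have hcK : c * K ≤ 1 / 4 ∧ 4 * c * K ≤ δ := by
    have hc' : c * (K + 1) = min δ 1 / 4 := by simp only [c]; field_simp
    constructor <;> nlinarith [min_le_left δ 1, min_le_right δ 1]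
  have hstrict : ∀ᶠ p in 𝓝 y₀ ×ˢ 𝓝 y₀, ‖f p.1 - f p.2 - D (p.1 - p.2)‖ ≤ c * ‖p.1 - p.2‖ := by
    rw [← nhds_prod_eq]
    exact (hf.hasStrictFDerivAt one_ne_zero).isLittleO.def hc
  have hcont : ∀ᶠ a in 𝓝 y₀, fderiv ℝ f a ∈ Metric.closedBall D c :=
    (hf.fderiv_right (m := 0) le_rfl).continuousAt (Metric.closedBall_mem_nhds D hc)
  filter_upwards [hstrict, tendsto_fst.eventually hcont] with ⟨a, b⟩ happrox hderiv
  rw [mem_closedBall_iff_norm] at hderiv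
  have hDa : ‖(fderiv ℝ f a - D) (a - b)‖ ≤ c * ‖a - b‖ :=
    ((fderiv ℝ f a - D).le_opNorm _).trans (mul_le_mul_of_nonneg_right hderiv (norm_nonneg _))
  have hsub : ‖a - b‖ ≤ K * (‖f a - f b‖ + c * ‖a - b‖) := by
    refine (D.bound_of_antilipschitz hK (a - b)).trans (mul_le_mul_of_nonneg_left ?_ K.2)
    calc ‖D (a - b)‖ = ‖(f a - f b) - (f a - f b - D (a - b))‖ := by rw [sub_sub_cancel]
      _ ≤ _ := (norm_sub_le _ _).trans (by gcongr)
  calc ‖f a - f b - fderiv ℝ f a (a - b)‖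
      = ‖(f a - f b - D (a - b)) - (fderiv ℝ f a - D) (a - b)‖ := by
        rw [sub_apply]; congr 1; abel
    _ ≤ 2 * c * ‖a - b‖ := (norm_sub_le _ _).trans (by linarith)
    _ ≤ 2 * c * (2 * K * ‖f a - f b‖) := by gcongr; nlinarith [norm_nonneg (a - b)]
    _ ≤ δ * ‖f a - f b‖ := by nlinarith [norm_nonneg (f a - f b)]

theorem Submodule.one_sub_mul_norm_le_norm_starProjection {E : Type*} [NormedAddCommGroup E]
    [InnerProductSpace ℝ E] {K : Submodule ℝ E} [K.HasOrthogonalProjection] {v w : E} {δ : ℝ}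
    (hw : w ∈ K) (hvw : ‖v - w‖ ≤ δ * ‖v‖) : (1 - δ) * ‖v‖ ≤ ‖K.starProjection v‖ := by
  have hmin : ‖v - K.starProjection v‖ ≤ ‖v - w‖ := by
    rw [Submodule.starProjection_minimal]
    exact ciInf_le ⟨0, fun _ ⟨_, h⟩ => h ▸ norm_nonneg _⟩ (⟨w, hw⟩ : K)
  linarith [norm_sub_norm_le v (K.starProjection v)]

theorem one_sub_le_norm_projSM_normalize {n : ℕ} {K : Submodule ℝ (Euc n)} {v w : Euc n} {δ : ℝ}
    (hv : v ≠ 0) (hw : w ∈ K) (hvw : ‖v - w‖ ≤ δ * ‖v‖) : 1 - δ ≤ ‖projSM K (‖v‖⁻¹ • v)‖ := by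
  have hv' : 0 < ‖v‖ := norm_pos_iff.2 hv
  have h := K.one_sub_mul_norm_le_norm_starProjection hw hvw
  rw [projSM, ← Submodule.starProjection_apply, map_smul, norm_smul, norm_inv, norm_norm,
    le_inv_mul_iff₀ hv']
  linarith

theorem IsSubmanifold.exists_ball_chord_near_tangent {n k : ℕ} {S : Set (Euc n)}
    {T : Euc n → Submodule ℝ (Euc n)} (hS : IsSubmanifold n k S T) {x : Euc n} (hx : x ∈ S)
    {δ : ℝ} (hδ : 0 < δ) :
    ∃ r > 0, ∀ p ∈ Metric.ball x r, ∀ q ∈ Metric.ball x r, p ∈ S → q ∈ S →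
      ∃ w ∈ T p, ‖p - q - w‖ ≤ δ * ‖p - q‖ := by
  obtain ⟨f, u, v, hu, -, hxv, hf, -, hfuv, hopen, hdf⟩ := hS x hx
  obtain ⟨y₀, hy₀, rfl⟩ : x ∈ f '' u := by rw [hfuv]; exact ⟨hx, hxv⟩
  have hf₀ : ContDiffAt ℝ 1 f y₀ :=
    (hf.contDiffAt (hu.mem_nhds hy₀)).of_le (by exact_mod_cast le_top)
  obtain ⟨t, ht, htt⟩ :=
    mem_prod_same_iff.1 (hf₀.eventually_norm_image_sub_sub_fderiv_le (hdf y₀ hy₀).1 hδ)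
  obtain ⟨s, hst, hs, hy₀s⟩ := mem_nhds_iff.1 (inter_mem ht (hu.mem_nhds hy₀))
  obtain ⟨w, hw, hsw⟩ := hopen s (hst.trans inter_subset_right) hs
  obtain ⟨r, hr, hrw⟩ := Metric.isOpen_iff.1 hw (f y₀)
    (hsw ▸ mem_image_of_mem f hy₀s).2
  refine ⟨r, hr, fun p hp q hq hpS hqS => ?_⟩
  obtain ⟨a, ha, rfl⟩ : p ∈ f '' s := by rw [hsw]; exact ⟨hpS, hrw hp⟩
  obtain ⟨b, hb, rfl⟩ : q ∈ f '' s := by rw [hsw]; exact ⟨hqS, hrw hq⟩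
  have hmem : fderiv ℝ f a (a - b) ∈ T (f a) := by
    rw [← (hdf a (hst ha).2).2]
    exact LinearMap.mem_range_self _ _
  have hchord := htt (mk_mem_prod (hst ha).1 (hst hb).1)
  exact ⟨_, hmem, hchord⟩

theorem IsCompact.exists_pos_forall_dist_lt_of_forall_ball {α : Type*} [PseudoMetricSpace α]
    {s : Set α} (hs : IsCompact s) {P : α → α → Prop}
    (hP : ∀ x ∈ s, ∃ r > 0, ∀ p ∈ Metric.ball x r, ∀ q ∈ Metric.ball x r, P p q) :
    ∃ δ > 0, ∀ p ∈ s, ∀ q, dist p q < δ → P p q := by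
  choose! r hr hP using hP
  obtain ⟨δ, hδ, hball⟩ := lebesgue_number_lemma_of_metric hs
    (c := fun x : s => Metric.ball (x : α) (r x)) (fun _ => Metric.isOpen_ball)
    (fun y hy => mem_iUnion.2 ⟨⟨y, hy⟩, Metric.mem_ball_self (hr y hy)⟩)
  refine ⟨δ, hδ, fun p hp q hpq => ?_⟩
  obtain ⟨⟨x, hx⟩, hδr⟩ := hball p hp
  exact hP x hx p (hδr (Metric.mem_ball_self hδ)) q (hδr (Metric.mem_ball'.2 hpq))

theorem chord_statement_11_general (n k : ℕ) (S : Set (Euc n))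
    (T : Euc n → Submodule ℝ (Euc n)) (hsub : IsSubmanifold n k S T) (hcpt : IsCompact S) :
    ∃ ε₀ : ℝ, 0 < ε₀ ∧ ∃ c₀ : ℝ, 0 < c₀ ∧
      ∀ p ∈ S, ∀ q ∈ S, p ≠ q → ‖p - q‖ < ε₀ →
        c₀ ≤ ‖projSM (T p) (‖p - q‖⁻¹ • (p - q))‖ ^ 2
          + ‖projSM (T q) (‖q - p‖⁻¹ • (q - p))‖ ^ 2 := by
  obtain ⟨ε₀, hε₀, hchord⟩ := hcpt.exists_pos_forall_dist_lt_of_forall_ball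
    (P := fun p q => p ∈ S → q ∈ S → ∃ w ∈ T p, ‖p - q - w‖ ≤ 1 / 4 * ‖p - q‖)
    fun x hx => hsub.exists_ball_chord_near_tangent hx (by norm_num)
  refine ⟨ε₀, hε₀, 9 / 16, by norm_num, fun p hp q hq hpq hpqε => ?_⟩
  obtain ⟨w, hw, hpqw⟩ := hchord p hp q (by rwa [dist_eq_norm]) hp hq
  have h := one_sub_le_norm_projSM_normalize (sub_ne_zero.2 hpq) hw hpqw
  nlinarith [sq_nonneg ‖projSM (T q) (‖q - p‖⁻¹ • (q - p))‖]

/-- For a compact smooth embedded submanifold `S ⊆ ℝⁿ` of dimension `k ≥ 1`, there are constants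
`ε₀, c₀ > 0` such that any chord of length less than `ε₀` has `‖η^T‖² ≥ c₀`. -/
theorem chord_statement_11 (n k : ℕ) (hk : 1 ≤ k) (S : Set (Euc n))
    (T : Euc n → Submodule ℝ (Euc n)) (hsub : IsSubmanifold n k S T) (hcpt : IsCompact S) :
    ∃ ε₀ : ℝ, 0 < ε₀ ∧ ∃ c₀ : ℝ, 0 < c₀ ∧
      ∀ p ∈ S, ∀ q ∈ S, p ≠ q → ‖p - q‖ < ε₀ →
        c₀ ≤ ‖projSM (T p) (‖p - q‖⁻¹ • (p - q))‖ ^ 2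
          + ‖projSM (T q) (‖q - p‖⁻¹ • (q - p))‖ ^ 2 :=
  chord_statement_11_general n k S T hsub hcpt

end
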